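/- (Pair counting formula in the proof of Theorem 3.2) Let F be a finite field with q elements and V = F^n with standard basis v_1,…,v_n. Let (n,m,k,l) be integers with 0 ≤ m ≤ ⌊n/2⌋, 0 ≤ k ≤ n, and max(0, m+k−n) ≤ l ≤ min(m,k); set M := m−l and N := n−m−k+l. Set V_l := span(v_1,…,v_l) and V_k^c := span(v_{k+1},…,v_n), and define Gr(n,m|k,l) := { W ⊆ V a linear subspace : V_l ⊆ W, dim W = m, dim(W ∩ V_k^c) = m−l }. Then for every integer i with 0 ≤ i ≤ m, the number of ordered pairs (W, W') ∈ Gr(n,m|k,l)² with m − dim(W ∩ W') = i equals G_q(n−k, m−l) · q^{i²} · G_q(M,i) · G_q(N,i). -/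

import Mathlib

open Finset

/-- The Gaussian binomial coefficient
`G_q(a,b) = Π_{j=1}^{b} (q^(a-j+1) - 1)/(q^j - 1)` (and `0` for `b > a`),
as a rational number. -/
def gbinom (q a b : ℕ) : ℚ :=
  if b ≤ a then ∏ j ∈ Finset.range b, ((q : ℚ) ^ (a - j) - 1) / ((q : ℚ) ^ (j + 1) - 1)
  else 0

/-- The coordinate subspace of `F^n` consisting of vectors supported on
coordinates `j` with `lo ≤ j < hi`.  For `lo = 0, hi = l` this is
`V_l = span(v_1,…,v_l)`, and for `lo = k, hi = n` it is
`V_k^c = span(v_{k+1},…,v_n)`, where `v_1,…,v_n` is the standard basis. -/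
def coordSub (F : Type*) [Field F] (n lo hi : ℕ) : Submodule F (Fin n → F) :=
  Submodule.pi Set.univ fun j => if lo ≤ (j : ℕ) ∧ (j : ℕ) < hi then ⊤ else ⊥

/-- Membership in the flag-constrained Grassmannian `Gr(n,m|k,l)`:
`V_l ⊆ W`, `dim W = m` and `dim(W ∩ V_k^c) = m - l`. -/
def memGr (F : Type*) [Field F] (n m k l : ℕ) (W : Submodule F (Fin n → F)) : Prop :=
  coordSub F n 0 l ≤ W ∧ Module.finrank F W = m ∧
    Module.finrank F (W ⊓ coordSub F n k n : Submodule F (Fin n → F)) = m - l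


namespace PairAux


variable {q : ℕ} (hq : 2 ≤ q)

/-- rational product `∏_{j<b} (q^e - q^j)` -/
def Pq (q e b : ℕ) : ℚ := ∏ j ∈ Finset.range b, ((q:ℚ)^e - (q:ℚ)^j)

def Qfact (q b : ℕ) : ℚ := ∏ j ∈ Finset.range b, ((q:ℚ)^(j+1) - 1)

include hq

lemma oneltq : (1:ℚ) < q := by exact_mod_cast hq

lemma Qfact_pos (b : ℕ) : 0 < Qfact q b := by
  refine Finset.prod_pos fun j _ => ?_
  have : (1:ℚ) < (q:ℚ)^(j+1) := one_lt_pow₀ (oneltq hq) (Nat.succ_ne_zero j)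
  linarith

lemma Pbb_pos (b : ℕ) : 0 < Pq q b b := by
  refine Finset.prod_pos fun j hj => ?_
  have : (q:ℚ)^j < (q:ℚ)^b := pow_lt_pow_right₀ (oneltq hq) (Finset.mem_range.mp hj)
  linarith

lemma cast_P (e b : ℕ) : ((∏ j ∈ Finset.range b, (q^e - q^j) : ℕ) : ℚ) = Pq q e b := by
  by_cases h : b ≤ e
  · rw [Nat.cast_prod]
    refine Finset.prod_congr rfl fun j hj => ?_
    have hj' : j ≤ e := le_trans (Nat.le_of_lt_succ (Nat.lt_succ_of_lt (Finset.mem_range.mp hj))) h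
    rw [Nat.cast_sub (Nat.pow_le_pow_right (by omega) hj')]
    push_cast; ring
  · have he : e ∈ Finset.range b := Finset.mem_range.mpr (by omega)
    rw [Finset.prod_eq_zero he (by simp), Pq, Finset.prod_eq_zero he (by simp)]
    simp

lemma prod_reflect_qfact (b : ℕ) : ∏ j ∈ Finset.range b, ((q:ℚ)^(b-j) - 1) = Qfact q b := by
  rw [Qfact, ← Finset.prod_range_reflect (fun j => ((q:ℚ)^(j+1) - 1)) b]
  refine Finset.prod_congr rfl fun j hj => ?_
  have : b - 1 - j + 1 = b - j := by have := Finset.mem_range.mp hj; omega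
  rw [this]

lemma Pq_eq {e b : ℕ} (h : b ≤ e) :
    Pq q e b = (q:ℚ)^(∑ j ∈ Finset.range b, j) * ∏ j ∈ Finset.range b, ((q:ℚ)^(e-j) - 1) := by
  rw [Pq, ← Finset.prod_pow_eq_pow_sum, ← Finset.prod_mul_distrib]
  refine Finset.prod_congr rfl fun j hj => ?_
  have hj' : j ≤ e := by have := Finset.mem_range.mp hj; omega
  have : (q:ℚ)^j * (q:ℚ)^(e-j) = (q:ℚ)^e := by
    rw [← pow_add]; congr 1; omega
  ring_nf
  nlinarith [this]

lemma gbinom_eq_div (e b : ℕ) : gbinom q e b = Pq q e b / Pq q b b := by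
  by_cases h : b ≤ e
  · rw [gbinom, if_pos h, Finset.prod_div_distrib, Pq_eq hq h, Pq_eq hq (le_refl b),
      prod_reflect_qfact hq]
    rw [mul_div_mul_left _ _ (by positivity)]
    rfl
  · rw [gbinom, if_neg h]
    have he : e ∈ Finset.range b := Finset.mem_range.mpr (by omega)
    rw [Pq, Finset.prod_eq_zero he (by simp), zero_div]

lemma gbinom_fact {a b : ℕ} (h : b ≤ a) :
    gbinom q a b = Qfact q a / (Qfact q b * Qfact q (a-b)) := by
  have key : Qfact q a = Qfact q (a-b) * ∏ j ∈ Finset.range b, ((q:ℚ)^(a-j) - 1) := by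
    have h0 : Qfact q a = ∏ j ∈ Finset.range ((a-b)+b), ((q:ℚ)^(j+1) - 1) := by
      unfold Qfact; congr 2; omega
    rw [h0, Finset.prod_range_add]
    congr 1
    rw [← Finset.prod_range_reflect (fun j => ((q:ℚ)^(a-j) - 1)) b]
    refine Finset.prod_congr rfl fun j hj => ?_
    congr 2
    have := Finset.mem_range.mp hj
    omega
  rw [gbinom, if_pos h, Finset.prod_div_distrib]
  have hden : ∏ x ∈ Finset.range b, ((q:ℚ)^(x+1) - 1) = Qfact q b := rfl
  rw [hden, key]
  have h1 : Qfact q b ≠ 0 := ne_of_gt (Qfact_pos hq b)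
  have h2 : Qfact q (a-b) ≠ 0 := ne_of_gt (Qfact_pos hq (a-b))
  field_simp
  
lemma gbinom_symm {M i : ℕ} (h : i ≤ M) : gbinom q M (M-i) = gbinom q M i := by
  rw [gbinom_fact hq (Nat.sub_le M i), gbinom_fact hq h]
  have : M - (M - i) = i := by omega
  rw [this, mul_comm]

end PairAux

section Counting
open Module Submodule

variable {F : Type*} [Field F] [Fintype F]
variable {V : Type*} [AddCommGroup V] [Module F V] [FiniteDimensional F V]

local notation "q" => Fintype.card F

namespace PairAux

lemma nat_card_fiber_sum {α β : Type*} [Finite α] [Fintype β] (g : α → β) :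
    Nat.card α = ∑ y : β, Nat.card {x : α // g x = y} := by
  classical
  rw [← Nat.card_congr (Equiv.sigmaFiberEquiv g)]
  letI := Fintype.ofFinite α
  rw [Nat.card_eq_fintype_card, Fintype.card_sigma]
  exact Finset.sum_congr rfl fun y _ => (Nat.card_eq_fintype_card).symm

lemma card_fiber_const_mul {α β : Type*} [Finite α] [Finite β] (g : α → β) (c : ℚ)
    (h : ∀ y : β, (Nat.card {x : α // g x = y} : ℚ) = c) :
    (Nat.card α : ℚ) = (Nat.card β : ℚ) * c := by
  classical
  letI := Fintype.ofFinite β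
  rw [nat_card_fiber_sum g]
  push_cast
  rw [Finset.sum_congr rfl (fun y _ => h y), Finset.sum_const, nsmul_eq_mul,
    Nat.card_eq_fintype_card, Finset.card_univ]

lemma card_submodule (C : Submodule F V) : Nat.card C = q ^ finrank F C := by
  haveI : Finite V := Module.finite_of_finite F
  letI := Fintype.ofFinite (↥C)
  rw [Nat.card_eq_fintype_card]
  exact card_eq_pow_finrank

lemma card_LI (b : ℕ) :
    Nat.card {f : Fin b → V // LinearIndependent F f} =
      ∏ j ∈ Finset.range b, (q ^ (finrank F V) - q ^ j) := by
  haveI : Finite V := Module.finite_of_finite F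
  by_cases hb : b ≤ finrank F V
  · rw [card_linearIndependent hb, ← Fin.prod_univ_eq_prod_range]
  · have hemp : IsEmpty {f : Fin b → V // LinearIndependent F f} := by
      constructor; rintro ⟨f, hf⟩
      have := hf.fintype_card_le_finrank
      simp only [Fintype.card_fin] at this
      omega
    rw [Nat.card_of_isEmpty]
    have hmem : finrank F V ∈ Finset.range b := Finset.mem_range.mpr (by omega)
    exact (Finset.prod_eq_zero hmem (by simp)).symm

lemma card_LI_quot (C : Submodule F V) (b : ℕ) :
    Nat.card {f : Fin b → V // LinearIndependent F (C.mkQ ∘ f)} =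
      q ^ (finrank F C * b) *
        ∏ j ∈ Finset.range b, (q ^ (finrank F V - finrank F C) - q ^ j) := by
  haveI : Finite V := Module.finite_of_finite F
  classical
  set sec : (V ⧸ C) → V := Function.surjInv (Submodule.mkQ_surjective C) with hsecdef
  have hsec : ∀ y, C.mkQ (sec y) = y := fun y => Function.surjInv_eq _ y
  have hmem : ∀ x : V, x ∈ C ↔ C.mkQ x = 0 := by
    intro x; simp [Submodule.mkQ_apply, Submodule.Quotient.mk_eq_zero]
  let e : {f : Fin b → V // LinearIndependent F (C.mkQ ∘ f)} ≃
      {g : Fin b → V ⧸ C // LinearIndependent F g} × (Fin b → C) :=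
    { toFun := fun f => ⟨⟨C.mkQ ∘ f.1, f.2⟩, fun j =>
        ⟨f.1 j - sec (C.mkQ (f.1 j)), by rw [hmem, map_sub, hsec, sub_self]⟩⟩
      invFun := fun gh => ⟨fun j => sec (gh.1.1 j) + (gh.2 j : V), by
        have hcomp : C.mkQ ∘ (fun j => sec (gh.1.1 j) + (gh.2 j : V)) = gh.1.1 := by
          funext j
          simp only [Function.comp_apply, map_add, hsec]
          rw [(hmem _).mp (gh.2 j).2, add_zero]
        rw [hcomp]; exact gh.1.2⟩
      left_inv := fun f => by
        apply Subtype.ext; funext j; simp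
      right_inv := fun gh => by
        refine Prod.ext (Subtype.ext (funext fun j => ?_)) (funext fun j => Subtype.ext ?_)
        · simp only [Function.comp_apply, map_add, hsec]
          rw [(hmem _).mp (gh.2 j).2, add_zero]
        · simp only [Function.comp_apply, map_add, hsec, (hmem _).mp (gh.2 j).2, add_zero]
          abel }
  rw [Nat.card_congr e, Nat.card_prod, card_LI, Nat.card_fun]
  have h1 : finrank F (V ⧸ C) = finrank F V - finrank F C := by
    have := Submodule.finrank_quotient_add_finrank C
    omega
  rw [h1, card_submodule, Nat.card_eq_fintype_card, Fintype.card_fin, ← pow_mul]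
  ring

lemma card_basis_fiber {b : ℕ} (W : Submodule F V) (hW : finrank F W = b) :
    Nat.card {f : Fin b → V // LinearIndependent F f ∧ Submodule.span F (Set.range f) = W} =
      ∏ j ∈ Finset.range b, (q ^ b - q ^ j) := by
  haveI : Finite V := Module.finite_of_finite F
  have e : {f : Fin b → V // LinearIndependent F f ∧ Submodule.span F (Set.range f) = W} ≃
      {g : Fin b → W // LinearIndependent F g} :=
    { toFun := fun f => ⟨fun j => ⟨f.1 j, by
          have h := Submodule.subset_span (R := F) (Set.mem_range_self (f := f.1) j)
          rwa [f.2.2] at h⟩,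
        by
          apply LinearIndependent.of_comp W.subtype
          exact f.2.1⟩
      invFun := fun g => ⟨fun j => (g.1 j : V), by
        constructor
        · exact g.2.map' W.subtype (Submodule.ker_subtype W)
        · have h1 : Submodule.span F (Set.range g.1) = ⊤ :=
            Submodule.eq_top_of_finrank_eq
              (by rw [finrank_span_eq_card g.2, Fintype.card_fin, hW])
          have h2 : Set.range (fun j => (g.1 j : V)) = W.subtype '' (Set.range g.1) := by
            rw [← Set.range_comp]; rfl
          rw [h2, ← Submodule.map_span, h1, Submodule.map_top, Submodule.range_subtype]⟩
      left_inv := fun f => Subtype.ext rfl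
      right_inv := fun g => Subtype.ext (funext fun j => Subtype.ext rfl) }
  rw [Nat.card_congr e, card_LI, hW]

end PairAux
end Counting

section Counting2
open Module Submodule

variable {F : Type*} [Field F] [Fintype F]
variable {V : Type*} [AddCommGroup V] [Module F V] [FiniteDimensional F V]

local notation "q" => Fintype.card F

namespace PairAux

lemma card_subspaces_Q (b : ℕ) :
    (Nat.card {W : Submodule F V // finrank F W = b} : ℚ) =
      Pq q (finrank F V) b / Pq q b b := by
  haveI : Finite V := Module.finite_of_finite F
  have hq2 : 2 ≤ q := Fintype.one_lt_card
  have key : (Nat.card {f : Fin b → V // LinearIndependent F f} : ℚ) =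
      (Nat.card {W : Submodule F V // finrank F W = b} : ℚ) * Pq q b b := by
    apply card_fiber_const_mul
      (fun f => (⟨Submodule.span F (Set.range f.1), by
        rw [finrank_span_eq_card f.2, Fintype.card_fin]⟩ :
          {W : Submodule F V // finrank F W = b}))
    intro W
    rw [← cast_P hq2 b b, ← card_basis_fiber W.1 W.2]
    congr 1
    apply Nat.card_congr
    exact { toFun := fun x => ⟨x.1.1, x.1.2, congrArg Subtype.val x.2⟩
            invFun := fun f => ⟨⟨f.1, f.2.1⟩, Subtype.ext f.2.2⟩
            left_inv := fun x => Subtype.ext (Subtype.ext rfl)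
            right_inv := fun f => Subtype.ext rfl }
  have hli : (Nat.card {f : Fin b → V // LinearIndependent F f} : ℚ) =
      Pq q (finrank F V) b := by rw [card_LI, cast_P hq2]
  rw [hli] at key
  rw [eq_div_iff (ne_of_gt (Pbb_pos hq2 b))]
  linarith [key]

lemma span_inf_eq_bot (C : Submodule F V) {b : ℕ} {f : Fin b → V}
    (h : LinearIndependent F (C.mkQ ∘ f)) : Submodule.span F (Set.range f) ⊓ C = ⊥ := by
  rw [eq_bot_iff]
  intro x hx
  rw [Submodule.mem_inf] at hx
  obtain ⟨hx1, hx2⟩ := hx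
  obtain ⟨c, hc⟩ := (mem_span_range_iff_exists_fun F).mp hx1
  have h0 : ∑ j, c j • (C.mkQ ∘ f) j = 0 := by
    simp only [Function.comp_apply, ← map_smul, ← map_sum, hc]
    simp [Submodule.mkQ_apply, Submodule.Quotient.mk_eq_zero, hx2]
  have hc0 : ∀ j, c j = 0 := Fintype.linearIndependent_iff.mp h c h0
  have hx0 : x = 0 := by
    rw [← hc]
    simp [hc0]
  simp [hx0]

lemma card_disjoint_Q (C : Submodule F V) (b : ℕ) :
    (Nat.card {W : Submodule F V // finrank F W = b ∧ W ⊓ C = ⊥} : ℚ) =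
      (q:ℚ) ^ (finrank F C * b) * Pq q (finrank F V - finrank F C) b / Pq q b b := by
  haveI : Finite V := Module.finite_of_finite F
  have hq2 : 2 ≤ q := Fintype.one_lt_card
  have key : (Nat.card {f : Fin b → V // LinearIndependent F (C.mkQ ∘ f)} : ℚ) =
      (Nat.card {W : Submodule F V // finrank F W = b ∧ W ⊓ C = ⊥} : ℚ) * Pq q b b := by
    apply card_fiber_const_mul
      (fun f => (⟨Submodule.span F (Set.range f.1),
        by rw [finrank_span_eq_card (LinearIndependent.of_comp C.mkQ f.2), Fintype.card_fin],
        span_inf_eq_bot C f.2⟩ :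
          {W : Submodule F V // finrank F W = b ∧ W ⊓ C = ⊥}))
    intro W
    rw [← cast_P hq2 b b, ← card_basis_fiber W.1 W.2.1]
    congr 1
    apply Nat.card_congr
    exact { toFun := fun x => ⟨x.1.1, LinearIndependent.of_comp C.mkQ x.1.2,
              congrArg Subtype.val x.2⟩
            invFun := fun f => ⟨⟨f.1, by
              have := LinearIndependent.map f.2.1 (f := C.mkQ)
                (by rw [Submodule.ker_mkQ, f.2.2]; exact disjoint_iff.mpr W.2.2)
              exact this⟩, Subtype.ext f.2.2⟩
            left_inv := fun x => Subtype.ext (Subtype.ext rfl)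
            right_inv := fun f => Subtype.ext rfl }
  have hli : (Nat.card {f : Fin b → V // LinearIndependent F (C.mkQ ∘ f)} : ℚ) =
      (q:ℚ) ^ (finrank F C * b) * Pq q (finrank F V - finrank F C) b := by
    rw [card_LI_quot, Nat.cast_mul, Nat.cast_pow, cast_P hq2]
  rw [hli] at key
  rw [eq_div_iff (ne_of_gt (Pbb_pos hq2 b))]
  linarith [key]

end PairAux
end Counting2

section Counting3
open Module Submodule

variable {F : Type*} [Field F] [Fintype F]
variable {V : Type*} [AddCommGroup V] [Module F V] [FiniteDimensional F V]

local notation "q" => Fintype.card F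

namespace PairAux

lemma finrank_map_mkQ (T A : Submodule F V) (h : T ≤ A) :
    finrank F (A.map T.mkQ) + finrank F T = finrank F A := by
  have h1 := LinearMap.finrank_range_add_finrank_ker (T.mkQ.comp A.subtype)
  have h2 : LinearMap.range (T.mkQ.comp A.subtype) = A.map T.mkQ := by
    rw [LinearMap.range_comp, Submodule.range_subtype]
  have h3 : LinearMap.ker (T.mkQ.comp A.subtype) = Submodule.comap A.subtype T := by
    rw [LinearMap.ker_comp, Submodule.ker_mkQ]
  have h4 : finrank F (Submodule.comap A.subtype T) = finrank F T :=
    (Submodule.comapSubtypeEquivOfLe h).finrank_eq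
  rw [h2, h3, h4] at h1
  exact h1

lemma ker_le_comap' (T : Submodule F V) (X : Submodule F (V ⧸ T)) :
    T ≤ Submodule.comap T.mkQ X := by
  intro x hx
  have hx0 : T.mkQ x = 0 := by simp [Submodule.mkQ_apply, Submodule.Quotient.mk_eq_zero, hx]
  simp [Submodule.mem_comap, hx0]

lemma card_inter_fixed {Mn i : ℕ} (U T : Submodule F V) (hTU : T ≤ U)
    (hU : finrank F U = Mn) (hT : finrank F T = Mn - i) (hiM : i ≤ Mn) :
    Nat.card {U' : Submodule F V // finrank F U' = Mn ∧ U' ⊓ U = T} =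
      Nat.card {X : Submodule F (V ⧸ T) // finrank F X = i ∧ X ⊓ U.map T.mkQ = ⊥} := by
  apply Nat.card_congr
  refine
    { toFun := fun U' => ⟨U'.1.map T.mkQ, ?_, ?_⟩
      invFun := fun X => ⟨Submodule.comap T.mkQ X.1, ?_, ?_⟩
      left_inv := ?_
      right_inv := ?_ }
  · -- finrank of image is i
    have hle : T ≤ U'.1 := le_trans (le_of_eq U'.2.2.symm) inf_le_left
    have hfr := finrank_map_mkQ T U'.1 hle
    rw [hT, U'.2.1] at hfr
    omega
  · -- image is disjoint from image of U
    rw [eq_bot_iff]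
    intro y hy
    rw [Submodule.mem_inf] at hy
    obtain ⟨hy1, hy2⟩ := hy
    obtain ⟨a, ha, rfl⟩ := Submodule.mem_map.mp hy1
    obtain ⟨u, hu, huv⟩ := Submodule.mem_map.mp hy2
    have hsub : u - a ∈ T := by
      rw [← Submodule.Quotient.eq]
      simpa [Submodule.mkQ_apply] using huv
    have haU : a ∈ U := by
      have : a = u - (u - a) := by abel
      rw [this]
      exact U.sub_mem hu (hTU hsub)
    have haT : a ∈ T := by
      have hmem := Submodule.mem_inf.mpr ⟨ha, haU⟩
      rwa [U'.2.2] at hmem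
    simp [Submodule.mem_bot, Submodule.mkQ_apply, Submodule.Quotient.mk_eq_zero, haT]
  · -- finrank of preimage is Mn
    have hle : T ≤ Submodule.comap T.mkQ X.1 := ker_le_comap' T X.1
    have hfr := finrank_map_mkQ T (Submodule.comap T.mkQ X.1) hle
    rw [Submodule.map_comap_eq_of_surjective (Submodule.mkQ_surjective T), hT, X.2.1] at hfr
    omega
  · -- preimage ⊓ U = T
    apply le_antisymm
    · intro x hx
      rw [Submodule.mem_inf] at hx
      obtain ⟨hx1, hx2⟩ := hx
      have hmm : T.mkQ x ∈ X.1 ⊓ U.map T.mkQ :=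
        Submodule.mem_inf.mpr ⟨hx1, Submodule.mem_map_of_mem hx2⟩
      rw [X.2.2, Submodule.mem_bot] at hmm
      simpa [Submodule.mkQ_apply, Submodule.Quotient.mk_eq_zero] using hmm
    · exact le_inf (ker_le_comap' T X.1) hTU
  · -- left inverse
    intro U'
    apply Subtype.ext
    show Submodule.comap T.mkQ (U'.1.map T.mkQ) = U'.1
    rw [Submodule.comap_map_mkQ]
    exact sup_eq_right.mpr (le_trans (le_of_eq U'.2.2.symm) inf_le_left)
  · -- right inverse
    intro X
    apply Subtype.ext
    show (Submodule.comap T.mkQ X.1).map T.mkQ = X.1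
    exact Submodule.map_comap_eq_of_surjective (Submodule.mkQ_surjective T) X.1

lemma card_le_subspaces (U : Submodule F V) (b : ℕ) :
    Nat.card {T : Submodule F V // T ≤ U ∧ finrank F T = b} =
      Nat.card {T' : Submodule F ↥U // finrank F T' = b} := by
  apply Nat.card_congr
  refine
    { toFun := fun T => ⟨Submodule.comap U.subtype T.1, ?_⟩
      invFun := fun T' => ⟨T'.1.map U.subtype, Submodule.map_subtype_le U T'.1, ?_⟩
      left_inv := ?_
      right_inv := ?_ }
  · rw [(Submodule.comapSubtypeEquivOfLe T.2.1).finrank_eq]; exact T.2.2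
  · rw [Submodule.finrank_map_subtype_eq]; exact T'.2
  · intro T
    apply Subtype.ext
    show (Submodule.comap U.subtype T.1).map U.subtype = T.1
    rw [Submodule.map_comap_subtype]
    exact inf_eq_right.mpr T.2.1
  · intro T'
    apply Subtype.ext
    show Submodule.comap U.subtype (T'.1.map U.subtype) = T'.1
    exact Submodule.comap_map_eq_of_injective (Submodule.injective_subtype U) T'.1

end PairAux
end Counting3

section Counting4
open Module Submodule

variable {F : Type*} [Field F] [Fintype F]
variable {V : Type*} [AddCommGroup V] [Module F V] [FiniteDimensional F V]

local notation "q" => Fintype.card F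

namespace PairAux

lemma card_inter_count (U : Submodule F V) {Mn i : ℕ} (hU : finrank F U = Mn) (hiM : i ≤ Mn) :
    (Nat.card {U' : Submodule F V // finrank F U' = Mn ∧
        finrank F (U' ⊓ U : Submodule F V) = Mn - i} : ℚ) =
      (Pq q Mn (Mn - i) / Pq q (Mn - i) (Mn - i)) *
        ((q:ℚ) ^ (i * i) * Pq q (finrank F V - Mn) i / Pq q i i) := by
  haveI : Finite V := Module.finite_of_finite F
  have hq2 : 2 ≤ q := Fintype.one_lt_card
  have hMd : Mn ≤ finrank F V := hU ▸ Submodule.finrank_le U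
  have main := card_fiber_const_mul
    (α := {U' : Submodule F V // finrank F U' = Mn ∧
        finrank F (U' ⊓ U : Submodule F V) = Mn - i})
    (β := {T : Submodule F V // T ≤ U ∧ finrank F T = Mn - i})
    (fun U' => ⟨U'.1 ⊓ U, inf_le_right, U'.2.2⟩)
    ((q:ℚ) ^ (i * i) * Pq q (finrank F V - Mn) i / Pq q i i)
    (fun T => by
      -- fiber over T
      have e1 : {x : {U' : Submodule F V // finrank F U' = Mn ∧
            finrank F (U' ⊓ U : Submodule F V) = Mn - i} //
            (⟨x.1 ⊓ U, inf_le_right, x.2.2⟩ : {T : Submodule F V // T ≤ U ∧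
              finrank F T = Mn - i}) = T} ≃
          {U' : Submodule F V // finrank F U' = Mn ∧ U' ⊓ U = T.1} :=
        { toFun := fun x => ⟨x.1.1, x.1.2.1, congrArg Subtype.val x.2⟩
          invFun := fun y => ⟨⟨y.1, y.2.1, by rw [y.2.2]; exact T.2.2⟩, Subtype.ext y.2.2⟩
          left_inv := fun x => Subtype.ext (Subtype.ext rfl)
          right_inv := fun y => Subtype.ext rfl }
      rw [Nat.card_congr e1, card_inter_fixed U T.1 T.2.1 hU T.2.2 hiM]
      -- now count in the quotient
      have hCfin : finrank F (U.map T.1.mkQ) = i := by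
        have := finrank_map_mkQ T.1 U T.2.1
        rw [hU, T.2.2] at this
        omega
      have hqfin : finrank F (V ⧸ T.1) = finrank F V - (Mn - i) := by
        have := Submodule.finrank_quotient_add_finrank T.1
        rw [T.2.2] at this
        omega
      rw [card_disjoint_Q (U.map T.1.mkQ) i, hCfin, hqfin]
      congr 3
      omega)
  rw [main, card_le_subspaces U (Mn - i), card_subspaces_Q (Mn - i), hU]

lemma card_pairs_Q {D Mn i : ℕ} (hD : finrank F V = D) (hMD : Mn ≤ D) (hiM : i ≤ Mn) :
    (Nat.card {P : Submodule F V × Submodule F V //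
        finrank F P.1 = Mn ∧ finrank F P.2 = Mn ∧
          finrank F (P.1 ⊓ P.2 : Submodule F V) = Mn - i} : ℚ) =
      (Pq q D Mn / Pq q Mn Mn) * ((Pq q Mn (Mn - i) / Pq q (Mn - i) (Mn - i)) *
        ((q:ℚ) ^ (i * i) * Pq q (D - Mn) i / Pq q i i)) := by
  haveI : Finite V := Module.finite_of_finite F
  have main := card_fiber_const_mul
    (α := {P : Submodule F V × Submodule F V //
        finrank F P.1 = Mn ∧ finrank F P.2 = Mn ∧
          finrank F (P.1 ⊓ P.2 : Submodule F V) = Mn - i})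
    (β := {W : Submodule F V // finrank F W = Mn})
    (fun P => ⟨P.1.1, P.2.1⟩)
    ((Pq q Mn (Mn - i) / Pq q (Mn - i) (Mn - i)) *
        ((q:ℚ) ^ (i * i) * Pq q (D - Mn) i / Pq q i i))
    (fun W => by
      have e1 : {x : {P : Submodule F V × Submodule F V //
            finrank F P.1 = Mn ∧ finrank F P.2 = Mn ∧
              finrank F (P.1 ⊓ P.2 : Submodule F V) = Mn - i} //
            (⟨x.1.1, x.2.1⟩ : {W : Submodule F V // finrank F W = Mn}) = W} ≃
          {U' : Submodule F V // finrank F U' = Mn ∧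
            finrank F (U' ⊓ W.1 : Submodule F V) = Mn - i} :=
        { toFun := fun x => ⟨x.1.1.2, x.1.2.2.1, by
            have hv : x.1.1.1 = W.1 := congrArg Subtype.val x.2
            rw [inf_comm, ← hv]
            exact x.1.2.2.2⟩
          invFun := fun y => ⟨⟨(W.1, y.1), W.2, y.2.1, by
            rw [inf_comm]; exact y.2.2⟩, Subtype.ext rfl⟩
          left_inv := fun x => by
            apply Subtype.ext
            apply Subtype.ext
            have hv : x.1.1.1 = W.1 := congrArg Subtype.val x.2
            exact Prod.ext hv.symm rfl
          right_inv := fun y => Subtype.ext rfl }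
      rw [Nat.card_congr e1, card_inter_count W.1 W.2 hiM, hD])
  rw [main, card_subspaces_Q Mn, hD]

end PairAux
end Counting4

section Geometry
open Module Submodule

variable {F : Type*} [Field F] [Fintype F]

namespace PairAux

lemma mem_coordSub {n lo hi : ℕ} {x : Fin n → F} :
    x ∈ coordSub F n lo hi ↔ ∀ j : Fin n, ¬(lo ≤ (j:ℕ) ∧ (j:ℕ) < hi) → x j = 0 := by
  simp only [coordSub, Submodule.mem_pi, Set.mem_univ, forall_true_left]
  constructor
  · intro h j hj
    have hh := h j
    rw [if_neg hj] at hh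
    simpa using hh
  · intro h j
    by_cases hj : lo ≤ (j:ℕ) ∧ (j:ℕ) < hi
    · rw [if_pos hj]; trivial
    · rw [if_neg hj]; simpa using h j hj

noncomputable def coordSubEquiv (n lo hi : ℕ) :
    (coordSub F n lo hi) ≃ₗ[F] ({j : Fin n // lo ≤ (j:ℕ) ∧ (j:ℕ) < hi} → F) where
  toFun := fun x j => (x : Fin n → F) j.1
  map_add' := fun x y => rfl
  map_smul' := fun c x => rfl
  invFun := fun g => ⟨fun j => if h : lo ≤ (j:ℕ) ∧ (j:ℕ) < hi then g ⟨j, h⟩ else 0, by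
    rw [mem_coordSub]
    intro j hj
    rw [dif_neg hj]⟩
  left_inv := fun x => by
    apply Subtype.ext; funext j
    dsimp only
    by_cases hj : lo ≤ (j:ℕ) ∧ (j:ℕ) < hi
    · simp only [dif_pos hj]
    · rw [dif_neg hj, (mem_coordSub.mp x.2 j hj).symm]
  right_inv := fun g => by
    funext j
    dsimp only
    simp only [dif_pos j.2]

lemma card_idx (n lo hi : ℕ) (h2 : hi ≤ n) :
    Fintype.card {j : Fin n // lo ≤ (j:ℕ) ∧ (j:ℕ) < hi} = hi - lo := by
  have e : {j : Fin n // lo ≤ (j:ℕ) ∧ (j:ℕ) < hi} ≃ {t : ℕ // t ∈ Finset.Ico lo hi} :=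
    { toFun := fun j => ⟨j.1.1, Finset.mem_Ico.mpr j.2⟩
      invFun := fun t => ⟨⟨t.1, lt_of_lt_of_le (Finset.mem_Ico.mp t.2).2 h2⟩,
        Finset.mem_Ico.mp t.2⟩
      left_inv := fun j => Subtype.ext (Fin.ext rfl)
      right_inv := fun t => Subtype.ext rfl }
  rw [Fintype.card_congr e, Fintype.card_coe, Nat.card_Ico]

lemma finrank_coordSub (n lo hi : ℕ) (h2 : hi ≤ n) :
    finrank F (coordSub F n lo hi) = hi - lo := by
  rw [(coordSubEquiv n lo hi).finrank_eq, Module.finrank_fintype_fun_eq_card,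
    card_idx n lo hi h2]

lemma coord_disjoint {n l k : ℕ} (hlk : l ≤ k) :
    coordSub F n 0 l ⊓ coordSub F n k n = ⊥ := by
  rw [eq_bot_iff]
  intro x hx
  rw [Submodule.mem_inf] at hx
  rw [Submodule.mem_bot]
  funext j
  show x j = 0
  by_cases hj : (j:ℕ) < l
  · exact mem_coordSub.mp hx.2 j (by push_neg; intro h; omega)
  · exact mem_coordSub.mp hx.1 j (by push_neg; intro _; omega)

lemma sup_inf_coord {n l k : ℕ} (hlk : l ≤ k) (A : Submodule F (Fin n → F))
    (hA : A ≤ coordSub F n k n) :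
    (coordSub F n 0 l ⊔ A) ⊓ coordSub F n k n = A := by
  apply le_antisymm
  · intro x hx
    rw [Submodule.mem_inf] at hx
    obtain ⟨hx1, hx2⟩ := hx
    obtain ⟨a, ha, u, hu, rfl⟩ := Submodule.mem_sup.mp hx1
    have haK : a ∈ coordSub F n k n := by
      have he : a = (a + u) - u := by abel
      rw [he]; exact Submodule.sub_mem _ hx2 (hA hu)
    have ha0 : a = 0 := by
      have hm : a ∈ coordSub F n 0 l ⊓ coordSub F n k n := Submodule.mem_inf.mpr ⟨ha, haK⟩
      rwa [coord_disjoint hlk, Submodule.mem_bot] at hm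
    rw [ha0, zero_add]; exact hu
  · exact le_inf le_sup_right hA

lemma inf_sup_coord {n l k : ℕ} (hlk : l ≤ k) (A B : Submodule F (Fin n → F))
    (hA : A ≤ coordSub F n k n) (hB : B ≤ coordSub F n k n) :
    (coordSub F n 0 l ⊔ A) ⊓ (coordSub F n 0 l ⊔ B) =
      coordSub F n 0 l ⊔ (A ⊓ B) := by
  apply le_antisymm
  · intro x hx
    rw [Submodule.mem_inf] at hx
    obtain ⟨a, ha, u, hu, rfl⟩ := Submodule.mem_sup.mp hx.1
    obtain ⟨b, hb, w, hw, hxeq⟩ := Submodule.mem_sup.mp hx.2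
    have h1 : a - b ∈ coordSub F n 0 l := Submodule.sub_mem _ ha hb
    have h2 : a - b ∈ coordSub F n k n := by
      have he : a - b = w - u := by
        have := hxeq
        abel_nf
        abel_nf at this
        linear_combination (norm := abel) -this
      rw [he]; exact Submodule.sub_mem _ (hB hw) (hA hu)
    have h0 : a - b = 0 := by
      have hm : a - b ∈ coordSub F n 0 l ⊓ coordSub F n k n := Submodule.mem_inf.mpr ⟨h1, h2⟩
      rwa [coord_disjoint hlk, Submodule.mem_bot] at hm
    have hab : a = b := sub_eq_zero.mp h0
    have huw : u = w := by
      have := hxeq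
      rw [← hab] at this
      exact (add_left_cancel this).symm
    exact Submodule.mem_sup.mpr ⟨a, ha, u, Submodule.mem_inf.mpr ⟨hu, huw ▸ hw⟩, rfl⟩
  · refine sup_le (le_inf le_sup_left le_sup_left)
      (le_inf (le_trans inf_le_left le_sup_right) (le_trans inf_le_right le_sup_right))

lemma inf_coord_bot {n l k : ℕ} (hlk : l ≤ k) (A : Submodule F (Fin n → F))
    (hA : A ≤ coordSub F n k n) : coordSub F n 0 l ⊓ A = ⊥ := by
  rw [eq_bot_iff, ← coord_disjoint (F := F) (n := n) hlk]
  exact inf_le_inf_left _ hA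

lemma finrank_sup_coord {n l k : ℕ} (hlk : l ≤ k) (hkn : k ≤ n)
    (A : Submodule F (Fin n → F)) (hA : A ≤ coordSub F n k n) :
    finrank F ↥(coordSub F n 0 l ⊔ A) = l + finrank F A := by
  have h := Submodule.finrank_sup_add_finrank_inf_eq (coordSub F n 0 l) A
  rw [inf_coord_bot hlk A hA, finrank_bot, add_zero,
    finrank_coordSub n 0 l (by omega)] at h
  omega

end PairAux
end Geometry

set_option maxHeartbeats 1000000 in
set_option synthInstance.maxHeartbeats 400000 in
open Module Submodule in
/-- **Pair counting formula in the proof of Theorem 3.2.**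
With `M = m - l` and `N = n - m - k + l`, for `0 ≤ i ≤ m` the number of ordered pairs
`(W, W') ∈ Gr(n,m|k,l)²` with `m - dim(W ∩ W') = i` equals
`G_q(n-k, m-l) q^(i²) G_q(M,i) G_q(N,i)`. -/
theorem pair_counting
    (F : Type*) [Field F] [Fintype F]
    (n m k l : ℕ) (hm : m ≤ n / 2) (hk : k ≤ n)
    (hl : m + k ≤ n + l) (hlm : l ≤ m) (hlk : l ≤ k)
    (i : ℕ) (hi : i ≤ m) :
    (Nat.card {P : Submodule F (Fin n → F) × Submodule F (Fin n → F) //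
        memGr F n m k l P.1 ∧ memGr F n m k l P.2 ∧
          Module.finrank F (P.1 ⊓ P.2 : Submodule F (Fin n → F)) = m - i} : ℚ) =
      gbinom (Fintype.card F) (n - k) (m - l) * (Fintype.card F : ℚ) ^ (i ^ 2) *
        gbinom (Fintype.card F) (m - l) i * gbinom (Fintype.card F) (n + l - m - k) i := by
  classical
  have hq2 : 2 ≤ Fintype.card F := Fintype.one_lt_card
  by_cases hiM : i ≤ m - l
  · -- main case
    set Vl := coordSub F n 0 l with hVl
    set Vkc := coordSub F n k n with hVkc
    have hln : l ≤ n := by omega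
    have hfrVkc : finrank F Vkc = n - k := by
      rw [hVkc, PairAux.finrank_coordSub n k n (le_refl n)]
    -- the map from submodules of Vkc to submodules of the ambient space
    set Ψ : Submodule F ↥Vkc → Submodule F (Fin n → F) :=
      fun U => Vl ⊔ U.map Vkc.subtype with hΨ
    set Φ : Submodule F (Fin n → F) → Submodule F ↥Vkc :=
      fun W => Submodule.comap Vkc.subtype (W ⊓ Vkc) with hΦ
    have hmaple : ∀ U : Submodule F ↥Vkc, U.map Vkc.subtype ≤ Vkc :=
      fun U => Submodule.map_subtype_le Vkc U
    have hfrΨ : ∀ U : Submodule F ↥Vkc, finrank F (Ψ U) = l + finrank F U := by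
      intro U
      rw [hΨ]
      rw [PairAux.finrank_sup_coord hlk hk _ (hmaple U), Submodule.finrank_map_subtype_eq]
    have hΨinfVkc : ∀ U : Submodule F ↥Vkc, (Ψ U) ⊓ Vkc = U.map Vkc.subtype := by
      intro U
      rw [hΨ]
      exact PairAux.sup_inf_coord hlk _ (hmaple U)
    have hmemGr : ∀ U : Submodule F ↥Vkc, memGr F n m k l (Ψ U) ↔ finrank F U = m - l := by
      intro U
      constructor
      · rintro ⟨-, h2, -⟩
        rw [hfrΨ U] at h2
        omega
      · intro hU
        refine ⟨le_sup_left, ?_, ?_⟩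
        · rw [hfrΨ U, hU]; omega
        · rw [hΨinfVkc U, Submodule.finrank_map_subtype_eq, hU]
    have hΦΨ : ∀ U : Submodule F ↥Vkc, Φ (Ψ U) = U := by
      intro U
      rw [hΦ]
      show Submodule.comap Vkc.subtype ((Ψ U) ⊓ Vkc) = U
      rw [hΨinfVkc U]
      exact Submodule.comap_map_eq_of_injective (Submodule.injective_subtype Vkc) U
    have hΨΦ : ∀ W : Submodule F (Fin n → F), memGr F n m k l W → Ψ (Φ W) = W := by
      rintro W ⟨h1, h2, h3⟩
      have hmapeq : (Φ W).map Vkc.subtype = W ⊓ Vkc := by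
        rw [hΦ]
        show Submodule.map Vkc.subtype (Submodule.comap Vkc.subtype (W ⊓ Vkc)) = W ⊓ Vkc
        rw [Submodule.map_comap_subtype]
        exact inf_eq_right.mpr inf_le_right
      rw [hΨ]
      show Vl ⊔ (Φ W).map Vkc.subtype = W
      rw [hmapeq]
      apply Submodule.eq_of_le_of_finrank_le (sup_le h1 inf_le_left)
      rw [h2, PairAux.finrank_sup_coord hlk hk _ inf_le_right, h3]
      omega
    -- decomposition of a Gr member
    have hdecomp : ∀ W : Submodule F (Fin n → F), memGr F n m k l W →
        W = Vl ⊔ (W ⊓ Vkc) := by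
      intro W hW
      have h0 : Submodule.map Vkc.subtype (Φ W) = W ⊓ Vkc := by
        show Submodule.map Vkc.subtype (Submodule.comap Vkc.subtype (W ⊓ Vkc)) = W ⊓ Vkc
        rw [Submodule.map_comap_subtype]
        exact inf_eq_right.mpr inf_le_right
      rw [← h0]
      exact (hΨΦ W hW).symm
    -- the big equivalence
    have E : {P : Submodule F (Fin n → F) × Submodule F (Fin n → F) //
        memGr F n m k l P.1 ∧ memGr F n m k l P.2 ∧
          Module.finrank F (P.1 ⊓ P.2 : Submodule F (Fin n → F)) = m - i} ≃
      {Q : Submodule F ↥Vkc × Submodule F ↥Vkc //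
        finrank F Q.1 = (m - l) ∧ finrank F Q.2 = (m - l) ∧
          finrank F (Q.1 ⊓ Q.2 : Submodule F ↥Vkc) = (m - l) - i} :=
    { toFun := fun P => ⟨(Φ P.1.1, Φ P.1.2), by
        obtain ⟨⟨W, W'⟩, h1, h2, h3⟩ := P
        have hA : finrank F (Φ W) = m - l := by
          show finrank F ↥(Submodule.comap Vkc.subtype (W ⊓ Vkc)) = m - l
          rw [(Submodule.comapSubtypeEquivOfLe (inf_le_right : W ⊓ Vkc ≤ Vkc)).finrank_eq]
          exact h1.2.2
        have hB : finrank F (Φ W') = m - l := by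
          show finrank F ↥(Submodule.comap Vkc.subtype (W' ⊓ Vkc)) = m - l
          rw [(Submodule.comapSubtypeEquivOfLe (inf_le_right : W' ⊓ Vkc ≤ Vkc)).finrank_eq]
          exact h2.2.2
        refine ⟨hA, hB, ?_⟩
        -- intersection rank
        have hWd := hdecomp W h1
        have hW'd := hdecomp W' h2
        have hinfd : W ⊓ W' = Vl ⊔ ((W ⊓ Vkc) ⊓ (W' ⊓ Vkc)) := by
          conv_lhs => rw [hWd, hW'd]
          exact PairAux.inf_sup_coord hlk _ _ inf_le_right inf_le_right
        have hfr : finrank F (W ⊓ W' : Submodule F (Fin n → F)) =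
            l + finrank F ((W ⊓ Vkc) ⊓ (W' ⊓ Vkc) : Submodule F (Fin n → F)) := by
          rw [hinfd]
          exact PairAux.finrank_sup_coord hlk hk _ (le_trans inf_le_left inf_le_right)
        rw [h3] at hfr
        have hcom : (Φ W ⊓ Φ W' : Submodule F ↥Vkc) =
            Submodule.comap Vkc.subtype ((W ⊓ Vkc) ⊓ (W' ⊓ Vkc)) :=
          (Submodule.comap_inf (W ⊓ Vkc) (W' ⊓ Vkc) Vkc.subtype).symm
        rw [hcom, (Submodule.comapSubtypeEquivOfLe
          (le_trans inf_le_left inf_le_right : (W ⊓ Vkc) ⊓ (W' ⊓ Vkc) ≤ Vkc)).finrank_eq]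
        omega⟩
      invFun := fun Q => ⟨(Ψ Q.1.1, Ψ Q.1.2), by
        obtain ⟨⟨U, U'⟩, h1, h2, h3⟩ := Q
        refine ⟨(hmemGr U).mpr h1, (hmemGr U').mpr h2, ?_⟩
        have hinf : Ψ U ⊓ Ψ U' = Vl ⊔ ((U ⊓ U').map Vkc.subtype) := by
          rw [hΨ]
          show (Vl ⊔ U.map Vkc.subtype) ⊓ (Vl ⊔ U'.map Vkc.subtype) = _
          rw [PairAux.inf_sup_coord hlk _ _ (hmaple U) (hmaple U'),
            Submodule.map_inf Vkc.subtype (Submodule.injective_subtype Vkc)]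
        rw [hinf, PairAux.finrank_sup_coord hlk hk _ (hmaple (U ⊓ U')),
          Submodule.finrank_map_subtype_eq, h3]
        omega⟩
      left_inv := fun P => by
        apply Subtype.ext
        exact Prod.ext (hΨΦ P.1.1 P.2.1) (hΨΦ P.1.2 P.2.2.1)
      right_inv := fun Q => by
        apply Subtype.ext
        exact Prod.ext (hΦΨ Q.1.1) (hΦΨ Q.1.2) }
    rw [Nat.card_congr E,
      PairAux.card_pairs_Q (D := n - k) (Mn := m - l) (i := i) hfrVkc (by omega) hiM]
    have hN : (n - k) - (m - l) = n + l - m - k := by omega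
    rw [hN]
    rw [PairAux.gbinom_eq_div hq2 (n - k) (m - l),
      ← PairAux.gbinom_symm hq2 hiM,
      PairAux.gbinom_eq_div hq2 (m - l) (m - l - i),
      PairAux.gbinom_eq_div hq2 (n + l - m - k) i]
    rw [pow_two]
    ring
  · -- degenerate case : no pairs
    have hempty : IsEmpty {P : Submodule F (Fin n → F) × Submodule F (Fin n → F) //
        memGr F n m k l P.1 ∧ memGr F n m k l P.2 ∧
          Module.finrank F (P.1 ⊓ P.2 : Submodule F (Fin n → F)) = m - i} := by
      constructor
      rintro ⟨⟨W, W'⟩, h1, h2, h3⟩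
      have hVl : coordSub F n 0 l ≤ W ⊓ W' := le_inf h1.1 h2.1
      have hfr : finrank F (coordSub F n 0 l) ≤
          finrank F (W ⊓ W' : Submodule F (Fin n → F)) :=
        Submodule.finrank_mono hVl
      rw [PairAux.finrank_coordSub n 0 l (by omega), h3] at hfr
      omega
    rw [Nat.card_of_isEmpty]
    have hz : gbinom (Fintype.card F) (m - l) i = 0 := by
      rw [gbinom, if_neg (by omega)]
    rw [hz]
    push_cast
    ring
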